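/- Let N ≥ 2, R ∈ ℝ, and a, b ∈ EuclideanSpace ℝ (Fin N). Let V ⊆ EuclideanSpace ℝ (Fin N) be open and let Ψ be twice continuously differentiable on V. Define I(r) = (R²/‖r − a‖²)·(r − a) + b. Then for every r₀ ≠ a with I(r₀) ∈ V, the Laplacian of the Kelvin-transformed function r ↦ ‖r − a‖^{−(N−2)} · Ψ(I(r)) at r₀ equals (R⁴/‖r₀ − a‖^{N+2}) · (Δ Ψ)(I(r₀)). -/

import Mathlib

/-- The Laplacian of a real-valued function on `EuclideanSpace ℝ (Fin N)`:
the sum of the second partial derivatives, i.e. the trace of the second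
Fréchet derivative. -/
noncomputable def laplacian {N : ℕ} (f : EuclideanSpace ℝ (Fin N) → ℝ)
    (x : EuclideanSpace ℝ (Fin N)) : ℝ :=
  ∑ i : Fin N,
    iteratedFDeriv ℝ 2 f x ![EuclideanSpace.single i 1, EuclideanSpace.single i 1]

/-!
Write `ρ = ‖y - c‖`, `n = dim E` and `ι` for the inversion in the sphere of radius `R` about `c`.
The derivative of `ι` is `(R / ρ)²` times a reflection, so the chain rule gives
`Δ (Ψ ∘ ι) = (R / ρ)⁴ (ΔΨ) ∘ ι + DΨ (Δι)` with `Δι = 2 (2 - n) R² ρ⁻⁴ (y - c)`.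
In the product rule for `ρ^(2 - n) • (Ψ ∘ ι)` the term `Δ ρ^(2 - n) • Ψ ∘ ι` vanishes since
`ρ^(2 - n)` is harmonic, and the cross term `2 D(Ψ ∘ ι)(∇ ρ^(2 - n))` cancels
`ρ^(2 - n) DΨ (Δι)`, because `Dι` reverses the radial direction.
-/

open Filter Topology

section SecondDerivative

variable {E F G : Type*} [NormedAddCommGroup E] [NormedSpace ℝ E]
  [NormedAddCommGroup F] [NormedSpace ℝ F] [NormedAddCommGroup G] [NormedSpace ℝ G] {x : E}

theorem fderiv_fderiv_smul_apply {φ : E → ℝ} {g : E → F} (hφ : ContDiffAt ℝ 2 φ x)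
    (hg : ContDiffAt ℝ 2 g x) (v w : E) :
    fderiv ℝ (fderiv ℝ fun y => φ y • g y) x v w =
      φ x • fderiv ℝ (fderiv ℝ g) x v w + fderiv ℝ φ x w • fderiv ℝ g x v +
        fderiv ℝ φ x v • fderiv ℝ g x w + fderiv ℝ (fderiv ℝ φ) x v w • g x := by
  have hD : fderiv ℝ (fun y => φ y • g y) =ᶠ[𝓝 x]
      fun y => φ y • fderiv ℝ g y + ContinuousLinearMap.smulRightL ℝ E F (fderiv ℝ φ y) (g y) := by
    filter_upwards [hφ.eventually (by simp), hg.eventually (by simp)] with y hφy hgy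
    exact fderiv_smul (hφy.differentiableAt (by simp)) (hgy.differentiableAt (by simp))
  have hφ' := (hφ.fderiv_right (m := 1) le_rfl).differentiableAt one_ne_zero
  have hg' := (hg.fderiv_right (m := 1) le_rfl).differentiableAt one_ne_zero
  have h := ((hφ.differentiableAt (by simp)).hasFDerivAt.fun_smul hg'.hasFDerivAt).fun_add
    ((ContinuousLinearMap.smulRightL ℝ E F).hasFDerivAt_of_bilinear hφ'.hasFDerivAt
      (hg.differentiableAt (by simp)).hasFDerivAt)
  rw [hD.fderiv_eq, h.fderiv]
  simp only [ContinuousLinearMap.precompR_apply, ContinuousLinearMap.compL_apply, add_apply,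
    smul_apply, ContinuousLinearMap.smulRight_apply, ContinuousLinearMap.comp_apply,
    ContinuousLinearMap.smulRightL_apply_apply, ContinuousLinearMap.precompL_apply]
  abel

theorem fderiv_fderiv_comp_apply {Ψ : F → G} {I : E → F} (hΨ : ContDiffAt ℝ 2 Ψ (I x))
    (hI : ContDiffAt ℝ 2 I x) (v w : E) :
    fderiv ℝ (fderiv ℝ (Ψ ∘ I)) x v w =
      fderiv ℝ (fderiv ℝ Ψ) (I x) (fderiv ℝ I x v) (fderiv ℝ I x w) +
        fderiv ℝ Ψ (I x) (fderiv ℝ (fderiv ℝ I) x v w) := by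
  have hD : fderiv ℝ (Ψ ∘ I) =ᶠ[𝓝 x] fun y => (fderiv ℝ Ψ ∘ I) y ∘L fderiv ℝ I y := by
    filter_upwards [hI.continuousAt.tendsto.eventually (hΨ.eventually (by simp)),
      hI.eventually (by simp)] with y hΨy hIy
    exact fderiv_comp y (hΨy.differentiableAt (by simp)) (hIy.differentiableAt (by simp))
  have hΨ' := (hΨ.fderiv_right (m := 1) le_rfl).differentiableAt one_ne_zero
  have hI' := (hI.fderiv_right (m := 1) le_rfl).differentiableAt one_ne_zero
  have h := (hΨ'.hasFDerivAt.comp x (hI.differentiableAt (by simp)).hasFDerivAt).clm_comp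
    hI'.hasFDerivAt
  rw [hD.fderiv_eq, h.fderiv]
  simp only [Function.comp_apply, add_apply, ContinuousLinearMap.comp_apply,
    ContinuousLinearMap.compL_apply, ContinuousLinearMap.flip_apply]
  abel

end SecondDerivative

section RadialPower

open InnerProductSpace Gradient

variable {E : Type*} [NormedAddCommGroup E] [InnerProductSpace ℝ E] {c x : E}

theorem contDiffAt_norm_sub_rpow (hx : x ≠ c) (p : ℝ) {n : WithTop ℕ∞} :
    ContDiffAt ℝ n (fun y => ‖y - c‖ ^ p) x :=
  ((contDiffAt_id.sub contDiffAt_const).norm ℝ (sub_ne_zero.mpr hx)).rpow_const_of_ne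
    (norm_ne_zero_iff.mpr (sub_ne_zero.mpr hx))

theorem hasFDerivAt_norm_sub_rpow (hx : x ≠ c) (p : ℝ) :
    HasFDerivAt (fun y => ‖y - c‖ ^ p) ((p * ‖x - c‖ ^ (p - 2)) • innerSL ℝ (x - c)) x := by
  have hsq : ∀ y : E, ∀ q : ℝ, ‖y - c‖ ^ q = (‖y - c‖ ^ 2) ^ (q / 2) := fun y q => by
    rw [← Real.rpow_natCast, ← Real.rpow_mul (norm_nonneg _)]
    ring_nf
  have h := ((hasFDerivAt_id x).sub_const c).norm_sq.rpow_const (p := p / 2)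
    (Or.inl (pow_ne_zero 2 (norm_ne_zero_iff.mpr (sub_ne_zero.mpr hx))))
  simp_rw [hsq]
  refine h.congr_fderiv ?_
  ext v
  simp only [id_eq, map_sub, ContinuousLinearMap.comp_id, smul_apply, sub_apply, coe_innerSL_apply,
    nsmul_eq_mul, Nat.cast_ofNat, smul_eq_mul]
  ring_nf

theorem hasGradientAt_norm_sub_rpow [CompleteSpace E] (hx : x ≠ c) (p : ℝ) :
    HasGradientAt (fun y => ‖y - c‖ ^ p) ((p * ‖x - c‖ ^ (p - 2)) • (x - c)) x := by
  rw [hasGradientAt_iff_hasFDerivAt]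
  refine (hasFDerivAt_norm_sub_rpow hx p).congr_fderiv ?_
  ext v
  simp [toDual_apply_apply]

end RadialPower

section Laplacian

open InnerProductSpace Module Laplacian Gradient EuclideanGeometry

variable {E E' F : Type*} [NormedAddCommGroup E] [InnerProductSpace ℝ E] [FiniteDimensional ℝ E]
  [NormedAddCommGroup E'] [InnerProductSpace ℝ E'] [FiniteDimensional ℝ E']
  [NormedAddCommGroup F] [NormedSpace ℝ F] {c x : E}

theorem laplacian_apply_eq_sum_fderiv_fderiv {ι : Type*} [Fintype ι] (b : OrthonormalBasis ι ℝ E)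
    (f : E → F) (x : E) : Δ f x = ∑ i, fderiv ℝ (fderiv ℝ f) x (b i) (b i) := by
  simp [laplacian_eq_iteratedFDeriv_orthonormalBasis f b, iteratedFDeriv_two_apply]

theorem laplacian_add_const (f : E → F) (d : F) : Δ (fun y => f y + d) = Δ f := by
  have h : fderiv ℝ (fun y => f y + d) = fderiv ℝ f := funext fun y => fderiv_add_const d
  ext x
  simp only [laplacian_apply_eq_sum_fderiv_fderiv (stdOrthonormalBasis ℝ E), h]

theorem laplacian_comp_add_right (f : E → F) (d x : E) :
    Δ (fun y => f (y + d)) x = Δ f (x + d) := by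
  have h : fderiv ℝ (fun y => f (y + d)) = fun y => fderiv ℝ f (y + d) :=
    funext fun y => fderiv_comp_add_right d
  simp only [laplacian_apply_eq_sum_fderiv_fderiv (stdOrthonormalBasis ℝ E), h,
    fderiv_comp_add_right]

theorem ContDiffAt.laplacian_fun_smul {φ : E → ℝ} {g : E → F} (hφ : ContDiffAt ℝ 2 φ x)
    (hg : ContDiffAt ℝ 2 g x) :
    Δ (fun y => φ y • g y) x = φ x • Δ g x + (2 : ℝ) • fderiv ℝ g x (∇ φ x) + Δ φ x • g x := by
  set b := stdOrthonormalBasis ℝ E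
  have hgrad : ∑ i, fderiv ℝ φ x (b i) • b i = ∇ φ x := by
    conv_rhs => rw [← b.sum_repr' (∇ φ x)]
    simp_rw [real_inner_comm, inner_gradient_left]
  simp only [laplacian_apply_eq_sum_fderiv_fderiv b, fderiv_fderiv_smul_apply hφ hg,
    Finset.sum_add_distrib, ← Finset.smul_sum, ← Finset.sum_smul, ← hgrad, map_sum, map_smul]
  module

theorem laplacian_comp_of_fderiv_eq_smul_linearIsometryEquiv {Ψ : E' → F} {I : E → E'}
    (hΨ : ContDiffAt ℝ 2 Ψ (I x)) (hI : ContDiffAt ℝ 2 I x) {s : ℝ} {Q : E ≃ₗᵢ[ℝ] E'}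
    (hDI : fderiv ℝ I x = s • (Q : E →L[ℝ] E')) :
    Δ (Ψ ∘ I) x = s ^ 2 • Δ Ψ (I x) + fderiv ℝ Ψ (I x) (Δ I x) := by
  set b := stdOrthonormalBasis ℝ E
  simp only [laplacian_apply_eq_sum_fderiv_fderiv b, laplacian_apply_eq_sum_fderiv_fderiv (b.map Q),
    fderiv_fderiv_comp_apply hΨ hI, hDI, Finset.sum_add_distrib, map_sum, Finset.smul_sum]
  simp [pow_two, mul_smul]

theorem laplacian_norm_sub_rpow (hx : x ≠ c) (p : ℝ) :
    Δ (fun y => ‖y - c‖ ^ p) x = p * (p + finrank ℝ E - 2) * ‖x - c‖ ^ (p - 2) := by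
  set b := stdOrthonormalBasis ℝ E
  have hD : fderiv ℝ (fun y => ‖y - c‖ ^ p) =ᶠ[𝓝 x]
      fun y => (p * ‖y - c‖ ^ (p - 2)) • innerSL ℝ (y - c) := by
    filter_upwards [eventually_ne_nhds hx] with y hy using (hasFDerivAt_norm_sub_rpow hy p).fderiv
  have hD2 : HasFDerivAt (fun y => (p * ‖y - c‖ ^ (p - 2)) • innerSL ℝ (y - c)) _ x :=
    ((hasFDerivAt_norm_sub_rpow hx (p - 2)).const_mul p).fun_smul
      ((innerSL ℝ).hasFDerivAt.comp x ((hasFDerivAt_id x).sub_const c))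
  have htrace : ∑ i, ⟪b i, b i⟫_ℝ = finrank ℝ E := by
    simp [b.norm_eq_one]
  have hparseval : ∑ i, ⟪x - c, b i⟫_ℝ * ⟪x - c, b i⟫_ℝ = ‖x - c‖ ^ 2 := by
    rw [← real_inner_self_eq_norm_sq, ← b.sum_inner_mul_inner]
    simp_rw [real_inner_comm (x - c)]
  have hpow : ‖x - c‖ ^ (p - 2 - 2) * ‖x - c‖ ^ 2 = ‖x - c‖ ^ (p - 2) := by
    rw [Real.rpow_sub (norm_pos_iff.mpr (sub_ne_zero.mpr hx)), Real.rpow_two,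
      div_mul_cancel₀ _ (by simpa using sub_ne_zero.mpr hx)]
  -- `innerSL ℝ` occurs here coerced as an `ℝ`-linear map, which `innerSL_apply_apply` misses
  have hinner : ∀ u v : E, (innerSL ℝ : E →L[ℝ] E →L[ℝ] ℝ) u v = ⟪u, v⟫_ℝ := fun _ _ => rfl
  rw [laplacian_apply_eq_sum_fderiv_fderiv b, hD.fderiv_eq, hD2.fderiv]
  simp only [add_apply, smul_apply, ContinuousLinearMap.comp_apply,
    ContinuousLinearMap.smulRight_apply, ContinuousLinearMap.id_apply, smul_eq_mul, hinner]
  calc _ = p * ‖x - c‖ ^ (p - 2) * ∑ i, ⟪b i, b i⟫_ℝ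
        + p * (p - 2) * ‖x - c‖ ^ (p - 2 - 2) * ∑ i, ⟪x - c, b i⟫_ℝ * ⟪x - c, b i⟫_ℝ := by
        simp only [Finset.mul_sum, ← Finset.sum_add_distrib]
        exact Finset.sum_congr rfl fun i _ => by ring
    _ = _ := by
        rw [htrace, hparseval, mul_assoc _ (‖x - c‖ ^ (p - 2 - 2)), hpow]
        ring

theorem laplacian_inversion (R : ℝ) (hx : x ≠ c) :
    Δ (inversion c R) x = (2 * (2 - finrank ℝ E) * R ^ 2 / ‖x - c‖ ^ 4) • (x - c) := by
  have hinv : inversion c R = fun y => ‖y - c‖ ^ (-2 : ℝ) • (R ^ 2 • (y - c)) + c := by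
    funext y
    rw [inversion, dist_eq_norm, Real.rpow_neg (norm_nonneg _), smul_smul,
      div_pow, Real.rpow_two, vsub_eq_sub, vadd_eq_add, div_eq_inv_mul]
  have hg : fderiv ℝ (fun y : E => R ^ 2 • (y - c)) = fun _ => R ^ 2 • ContinuousLinearMap.id ℝ E :=
    funext fun y => (((hasFDerivAt_id y).sub_const c).const_smul (R ^ 2)).fderiv
  have hΔg : Δ (fun y : E => R ^ 2 • (y - c)) x = 0 := by
    simp [laplacian_apply_eq_sum_fderiv_fderiv (stdOrthonormalBasis ℝ E), hg]
  have hgC : ContDiffAt ℝ 2 (fun y : E => R ^ 2 • (y - c)) x := by fun_prop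
  have hpow : ‖x - c‖ ^ ((-2 : ℝ) - 2) = (‖x - c‖ ^ 4)⁻¹ := by
    rw [show (-2 : ℝ) - 2 = -(4 : ℕ) by norm_num, Real.rpow_neg (norm_nonneg _), Real.rpow_natCast]
  rw [hinv, laplacian_add_const,
    ContDiffAt.laplacian_fun_smul (contDiffAt_norm_sub_rpow hx (-2)) hgC, hΔg, hg,
    laplacian_norm_sub_rpow hx, (hasGradientAt_norm_sub_rpow hx _).gradient, hpow]
  simp only [smul_zero, zero_add, smul_apply, ContinuousLinearMap.id_apply]
  module

noncomputable def kelvinTransform (c : E) (R : ℝ) (Ψ : E → F) (y : E) : F :=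
  ‖y - c‖ ^ (2 - finrank ℝ E : ℝ) • Ψ (inversion c R y)

theorem laplacian_kelvinTransform (R : ℝ) {Ψ : E → F} (hx : x ≠ c)
    (hΨ : ContDiffAt ℝ 2 Ψ (inversion c R x)) :
    Δ (kelvinTransform c R Ψ) x =
      (R ^ 4 / ‖x - c‖ ^ (finrank ℝ E + 2 : ℝ)) • Δ Ψ (inversion c R x) := by
  set n : ℝ := (finrank ℝ E : ℝ)
  have hρ : 0 < ‖x - c‖ := norm_pos_iff.mpr (sub_ne_zero.mpr hx)
  have hinvC : ContDiffAt ℝ 2 (inversion c R) x :=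
    contDiffAt_const.inversion contDiffAt_const contDiffAt_id hx
  have hDinv := (hasFDerivAt_inversion (R := R) hx).fderiv
  rw [dist_eq_norm] at hDinv
  have hradial : ∀ s : ℝ, fderiv ℝ (Ψ ∘ inversion c R) x (s • (x - c)) =
      (-(s * (R / ‖x - c‖) ^ 2)) • fderiv ℝ Ψ (inversion c R x) (x - c) := fun s => by
    rw [fderiv_comp x (hΨ.differentiableAt two_ne_zero) (hinvC.differentiableAt two_ne_zero), hDinv]
    simp only [ContinuousLinearMap.comp_apply, smul_apply, map_smul,
      ContinuousLinearEquiv.coe_coe, LinearIsometryEquiv.coe_toContinuousLinearEquiv,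
      Submodule.reflection_orthogonalComplement_singleton_eq_neg, map_neg, smul_smul, neg_smul,
      smul_neg]
  have hshift : ‖x - c‖ ^ (2 - n - 2) = ‖x - c‖ ^ (2 - n) / ‖x - c‖ ^ 2 := by
    rw [Real.rpow_sub hρ, Real.rpow_two]
  have hsum : ‖x - c‖ ^ (n + 2) * ‖x - c‖ ^ (2 - n) = ‖x - c‖ ^ 4 := by
    rw [← Real.rpow_add hρ, show n + 2 + (2 - n) = (4 : ℕ) by ring, Real.rpow_natCast]
  show Δ (fun y => _ • (Ψ ∘ inversion c R) y) x = _
  rw [ContDiffAt.laplacian_fun_smul (contDiffAt_norm_sub_rpow hx _) (hΨ.comp x hinvC),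
    laplacian_comp_of_fderiv_eq_smul_linearIsometryEquiv hΨ hinvC hDinv, laplacian_inversion R hx,
    laplacian_norm_sub_rpow hx, (hasGradientAt_norm_sub_rpow hx _).gradient, hradial, map_smul,
    hshift, show 2 - n + n - 2 = 0 by ring, mul_zero, zero_mul, zero_smul, add_zero]
  match_scalars
  · field_simp
    linear_combination R ^ 4 * hsum
  · field_simp
    ring

theorem laplacian_eq_laplacian_euclideanSpace {N : ℕ} (f : EuclideanSpace ℝ (Fin N) → ℝ)
    (x : EuclideanSpace ℝ (Fin N)) : _root_.laplacian f x = Δ f x := by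
  simp [_root_.laplacian,
    laplacian_eq_iteratedFDeriv_orthonormalBasis f (EuclideanSpace.basisFun (Fin N) ℝ)]

end Laplacian

theorem kelvin_transform_laplacian
    {N : ℕ} (R : ℝ)
    (a b : EuclideanSpace ℝ (Fin N))
    (V : Set (EuclideanSpace ℝ (Fin N))) (hV : IsOpen V)
    (Ψ : EuclideanSpace ℝ (Fin N) → ℝ) (hΨ : ContDiffOn ℝ 2 Ψ V)
    (I : EuclideanSpace ℝ (Fin N) → EuclideanSpace ℝ (Fin N))
    (hI : I = fun r => (R ^ 2 / ‖r - a‖ ^ 2) • (r - a) + b) :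
    ∀ r₀ : EuclideanSpace ℝ (Fin N), r₀ ≠ a → I r₀ ∈ V →
      laplacian (fun r => ‖r - a‖ ^ (-((N : ℝ) - 2)) * Ψ (I r)) r₀
        = (R ^ 4 / ‖r₀ - a‖ ^ ((N : ℝ) + 2)) * laplacian Ψ (I r₀) := by
  intro r₀ hr₀ hIr₀
  have hI' : I = fun r => EuclideanGeometry.inversion a R r + (b - a) := by
    rw [hI]
    funext r
    simp only [EuclideanGeometry.inversion, dist_eq_norm, div_pow, vsub_eq_sub, vadd_eq_add]
    abel
  have hK : (fun r => ‖r - a‖ ^ (-((N : ℝ) - 2)) * Ψ (I r)) =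
      kelvinTransform a R (fun z => Ψ (z + (b - a))) := by
    funext r
    simp [kelvinTransform, hI']
  have hΨI : ContDiffAt ℝ 2 Ψ (I r₀) := hΨ.contDiffAt (hV.mem_nhds hIr₀)
  rw [hI'] at hΨI
  have hΨ' : ContDiffAt ℝ 2 (fun z => Ψ (z + (b - a))) (EuclideanGeometry.inversion a R r₀) :=
    hΨI.comp (f := fun z => z + (b - a)) _ (contDiffAt_id.add contDiffAt_const)
  rw [laplacian_eq_laplacian_euclideanSpace, laplacian_eq_laplacian_euclideanSpace, hK,
    laplacian_kelvinTransform R hr₀ hΨ', laplacian_comp_add_right, finrank_euclideanSpace_fin, hI',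
    smul_eq_mul]
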